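/- arXiv:1709.06878 — 3 statements merged into one kernel-verified Lean document; each statement's English description precedes it below -/
import Mathlib

section
/- Let η_l < η_r and let F : ℝ → ℝ be of class C³ and bistable between η_l and η_r. Let (η, c) be a Weertman profile with velocity c for the potential F. Then lim_{x→+∞} x·(η(x) − η_r) = (η_l − η_r)/(π F''(η_r)) and lim_{x→−∞} x·(η(x) − η_l) = (η_l − η_r)/(π F''(η_l)). -/
open MeasureTheory Filter Set

/-- The half-Laplacian `|∂x|` acting on a bounded C² function. -/
noncomputable def halfLap (u : ℝ → ℝ) (x : ℝ) : ℝ :=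
  -(1 / Real.pi) * ∫ y in Set.Ioi (0 : ℝ), (u (x + y) - 2 * u x + u (x - y)) / y ^ 2

/-!
Let `Φ` be a primitive of `η` and `δ²g(z, y) = g(z + y) - 2 g(z) + g(z - y)`. The renormalised
integral `N(z) = ∫₀^∞ (δ²Φ(z, y) - δ²Φ(0, y)) / y² dy` converges and `N' = -π |∂x|η`, so the
profile equation integrated over `[x, λx]` reads
`π ∫ₓ^{λx} F'(η) = c π (η(λx) - η(x)) + ∫₀^∞ (δ²Φ(λx, y) - δ²Φ(x, y)) / y² dy`.
Integrating in `z` first is what makes the argument work: a pointwise expansion of `|∂x|η(x)`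
would need bounds on `η''`. After the substitution `y = xv`, the Cesàro limits
`Φ(ax)/x → a η(±∞)` and dominated convergence (the decay `η' ≤ B/x²` controls small `v`)
give the limit `-(η_r - η_l) log λ`. Since `F'(η) = F''(η_r)(η - η_r) + o(1/x)`, it follows that
`∫ₓ^{λx} (η - η_r) → (η_l - η_r) log λ / (π F''(η_r))` for every `λ > 1`, and monotonicity of `η`
turns these averages into the limit of `x (η(x) - η_r)`. The end at `-∞` follows by applying
this to the reflected profile `x ↦ η_l + η_r - η(-x)`.
-/

open Topology Asymptotics

lemma integrableOn_Ioi_inv_sq {a : ℝ} (ha : 0 < a) :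
    IntegrableOn (fun y : ℝ => (y ^ 2)⁻¹) (Ioi a) := by
  refine integrableOn_Ioi_deriv_of_nonneg (g := fun y => -y⁻¹)
    ((continuousAt_inv₀ ha.ne').neg.continuousWithinAt) (fun x hx => ?_)
    (fun x hx => by have := ha.trans hx; positivity) (by simpa using tendsto_inv_atTop_zero.neg)
  exact (hasDerivAt_inv (ha.trans hx).ne').neg.congr_deriv (by ring)

lemma integral_Ioi_inv_sq {a : ℝ} (ha : 0 < a) : ∫ y in Ioi a, (y ^ 2)⁻¹ = a⁻¹ := by
  rw [integral_Ioi_of_hasDerivAt_of_tendsto (f := fun y => -y⁻¹) (m := 0)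
    (continuousAt_inv₀ ha.ne').neg.continuousWithinAt
    (fun y hy => (hasDerivAt_inv (ha.trans hy).ne').neg.congr_deriv (by ring))
    (integrableOn_Ioi_inv_sq ha) (by simpa using (tendsto_inv_atTop_zero (𝕜 := ℝ)).neg)]
  ring

lemma abs_div_sq_le_ite {w v c C₁ C₂ : ℝ} (hv : 0 < v) (h₁ : v ≤ c → |w| ≤ C₁ * v ^ 2)
    (h₂ : c < v → |w| ≤ C₂) : |w / v ^ 2| ≤ if v ≤ c then C₁ else C₂ * (v ^ 2)⁻¹ := by
  have hv2 : 0 < v ^ 2 := by positivity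
  rw [abs_div, abs_of_pos hv2]
  split_ifs with h
  · rw [div_le_iff₀ hv2]; exact h₁ h
  · rw [← div_eq_mul_inv]; exact div_le_div_of_nonneg_right (h₂ (not_le.1 h)) hv2.le

lemma integrableOn_Ioi_ite_inv_sq {c : ℝ} (hc : 0 < c) (C₁ C₂ : ℝ) :
    IntegrableOn (fun y : ℝ => if y ≤ c then C₁ else C₂ * (y ^ 2)⁻¹) (Ioi 0) := by
  rw [← Ioc_union_Ioi_eq_Ioi hc.le]
  refine IntegrableOn.union ?_ ?_
  · refine (integrableOn_const (C := C₁) measure_Ioc_lt_top.ne).congr_fun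
      (fun y hy => ?_) measurableSet_Ioc
    simp [hy.2]
  · refine IntegrableOn.congr_fun ((integrableOn_Ioi_inv_sq hc).const_mul C₂)
      (fun y hy => ?_) measurableSet_Ioi
    simp [not_le.2 (mem_Ioi.1 hy)]

lemma integrableOn_Ioi_div_sq_of_bound {f : ℝ → ℝ} {c C₁ C₂ : ℝ} (hc : 0 < c)
    (hf : ContinuousOn f (Ioi 0)) (h₁ : ∀ y, 0 < y → y ≤ c → |f y| ≤ C₁ * y ^ 2)
    (h₂ : ∀ y, c < y → |f y| ≤ C₂) :
    IntegrableOn (fun y => f y / y ^ 2) (Ioi 0) := by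
  refine (integrableOn_Ioi_ite_inv_sq hc C₁ C₂).mono' ?_ ?_
  · exact (hf.div (by fun_prop) fun y hy => pow_ne_zero 2 (ne_of_gt hy)).aestronglyMeasurable
      measurableSet_Ioi
  · refine (ae_restrict_iff' measurableSet_Ioi).2 (Eventually.of_forall fun y hy => ?_)
    exact abs_div_sq_le_ite hy (h₁ y hy) (h₂ y)

lemma integral_Ioi_div_sq_eq_comp_mul {g : ℝ → ℝ} {x : ℝ} (hx : 0 < x) :
    ∫ y in Ioi 0, g y / y ^ 2 = ∫ v in Ioi 0, g (x * v) / x / v ^ 2 := by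
  have h := integral_comp_mul_left_Ioi (fun y => g y / y ^ 2) 0 hx
  rw [mul_zero, smul_eq_mul, eq_inv_mul_iff_mul_eq₀ hx.ne', ← integral_const_mul] at h
  rw [← h]
  congr 1 with v
  rcases eq_or_ne v 0 with rfl | hv
  · simp
  · field_simp

lemma tendsto_log_div_sub_one_nhdsGT_one :
    Tendsto (fun l : ℝ => Real.log l / (l - 1)) (𝓝[>] 1) (𝓝 1) := by
  have h := hasDerivAt_iff_tendsto_slope.mp (Real.hasDerivAt_log one_ne_zero)
  have e : slope Real.log 1 = fun l => Real.log l / (l - 1) := by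
    funext l; simp [slope_def_field]
  rw [e, inv_one] at h
  exact h.mono_left (nhdsWithin_mono _ fun l hl => ne_of_gt hl)

lemma Monotone.mul_le_integral {g : ℝ → ℝ} (hg : Monotone g) {a b : ℝ} (hab : a ≤ b) :
    (b - a) * g a ≤ ∫ t in a..b, g t := by
  simpa using intervalIntegral.integral_mono_on hab intervalIntegrable_const
    (hg.intervalIntegrable (μ := volume)) fun t ht => hg ht.1

lemma Monotone.integral_le_mul {g : ℝ → ℝ} (hg : Monotone g) {a b : ℝ} (hab : a ≤ b) :
    ∫ t in a..b, g t ≤ (b - a) * g b := by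
  simpa using intervalIntegral.integral_mono_on hab (hg.intervalIntegrable (μ := volume))
    intervalIntegrable_const fun t ht => hg ht.2

lemma Monotone.abs_le_max_of_tendsto {η : ℝ → ℝ} {ηl ηr : ℝ} (hmono : Monotone η)
    (hbot : Tendsto η atBot (𝓝 ηl)) (htop : Tendsto η atTop (𝓝 ηr)) (x : ℝ) :
    |η x| ≤ max |ηl| |ηr| :=
  abs_le_max_abs_abs (hmono.le_of_tendsto hbot x) (hmono.ge_of_tendsto htop x)

theorem Monotone.tendsto_mul_of_tendsto_integral {g : ℝ → ℝ} (hg : Monotone g) {L : ℝ}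
    (h : ∀ l, 1 < l → Tendsto (fun x => ∫ t in x..l * x, g t) atTop (𝓝 (L * Real.log l))) :
    Tendsto (fun x => x * g x) atTop (𝓝 L) := by
  have hslope := tendsto_log_div_sub_one_nhdsGT_one
  refine tendsto_order.2 ⟨fun a ha => ?_, fun b hb => ?_⟩
  · have hlim : Tendsto (fun l : ℝ => L * (l * (Real.log l / (l - 1)))) (𝓝[>] 1) (𝓝 L) := by
      simpa using (tendsto_nhdsWithin_of_tendsto_nhds tendsto_id).mul hslope |>.const_mul L
    obtain ⟨l, hal, hl : 1 < l⟩ := ((hlim.eventually (lt_mem_nhds ha)).and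
      self_mem_nhdsWithin).exists
    have hl0 : 0 < l := by linarith
    have hJ := ((h l hl).comp (tendsto_id.atTop_div_const hl0)).const_mul (l / (l - 1))
    have hval : l / (l - 1) * (L * Real.log l) = L * (l * (Real.log l / (l - 1))) := by ring
    rw [hval] at hJ
    filter_upwards [hJ.eventually (lt_mem_nhds hal), eventually_gt_atTop 0] with y hy hy0
    refine hy.trans_le ?_
    have hle := hg.integral_le_mul (div_le_self hy0.le hl.le)
    simp only [Function.comp_apply, id, mul_div_cancel₀ _ hl0.ne']
    calc l / (l - 1) * ∫ t in y / l..y, g t ≤ l / (l - 1) * ((y - y / l) * g y) :=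
          mul_le_mul_of_nonneg_left hle (div_nonneg hl0.le (by linarith))
      _ = y * g y := by field_simp [show l - 1 ≠ 0 by linarith]
  · have hlim : Tendsto (fun l : ℝ => L * (Real.log l / (l - 1))) (𝓝[>] 1) (𝓝 L) := by
      simpa using hslope.const_mul L
    obtain ⟨l, hbl, hl : 1 < l⟩ := ((hlim.eventually (gt_mem_nhds hb)).and
      self_mem_nhdsWithin).exists
    have hJ := (h l hl).div_const (l - 1)
    have hval : L * Real.log l / (l - 1) = L * (Real.log l / (l - 1)) := by ring
    rw [hval] at hJ
    filter_upwards [hJ.eventually (gt_mem_nhds hbl), eventually_gt_atTop 0] with x hx hx0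
    refine lt_of_le_of_lt ?_ hx
    have hle := hg.mul_le_integral (a := x) (b := l * x) (by nlinarith)
    rw [le_div_iff₀ (by linarith)]
    nlinarith

lemma tendsto_integral_of_isLittleO_inv {h : ℝ → ℝ} (ho : h =o[atTop] fun t => t⁻¹) {l : ℝ}
    (hl : 1 < l) : Tendsto (fun x => ∫ t in x..l * x, h t) atTop (𝓝 0) := by
  rw [← isLittleO_one_iff ℝ]
  refine IsLittleO.of_bound fun ε hε => ?_
  obtain ⟨T, hT⟩ := eventually_atTop.1 (ho.def (c := ε / l) (by positivity))
  filter_upwards [eventually_ge_atTop T, eventually_gt_atTop 0] with x hxT hx0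
  have hbound : ∀ t ∈ uIoc x (l * x), ‖h t‖ ≤ ε / l * x⁻¹ := by
    intro t ht
    rw [uIoc_of_le (by nlinarith)] at ht
    have ht0 : 0 < t := hx0.trans ht.1
    refine (hT t (hxT.trans ht.1.le)).trans ?_
    rw [norm_inv, Real.norm_of_nonneg ht0.le]
    gcongr
    exact ht.1.le
  refine (intervalIntegral.norm_integral_le_of_norm_le_const hbound).trans ?_
  rw [abs_of_nonneg (by nlinarith), norm_one, mul_one]
  calc ε / l * x⁻¹ * (l * x - x) = ε * ((l - 1) / l) := by field_simp
    _ ≤ ε := mul_le_of_le_one_right hε.le ((div_le_one (by linarith)).2 (by linarith))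

lemma sub_le_div_of_deriv_le_div_sq {f : ℝ → ℝ} {ℓ B a : ℝ} (hf : Differentiable ℝ f)
    (ha : 0 < a) (hB : ∀ x, a ≤ x → deriv f x ≤ B / x ^ 2) (hlim : Tendsto f atTop (𝓝 ℓ)) :
    ℓ - f a ≤ B / a := by
  have hderiv : ∀ x, 0 < x →
      HasDerivAt (fun t => f t + B * t⁻¹) (deriv f x - B / x ^ 2) x := fun x hx =>
    ((hf x).hasDerivAt.add ((hasDerivAt_inv hx.ne').const_mul B)).congr_deriv (by ring)
  have hanti : AntitoneOn (fun t => f t + B * t⁻¹) (Ici a) := by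
    refine antitoneOn_of_deriv_nonpos (convex_Ici a) (fun x hx => ?_) (fun x hx => ?_)
      fun x hx => ?_
    · exact (hderiv x (ha.trans_le hx)).continuousAt.continuousWithinAt
    · rw [interior_Ici] at hx
      exact (hderiv x (ha.trans hx)).differentiableAt.differentiableWithinAt
    · rw [interior_Ici] at hx
      rw [(hderiv x (ha.trans hx)).deriv, sub_nonpos]
      exact hB x hx.le
  have hlim' : Tendsto (fun t => f t + B * t⁻¹) atTop (𝓝 (ℓ + B * 0)) :=
    hlim.add (tendsto_inv_atTop_zero.const_mul B)
  have : ℓ + B * 0 ≤ f a + B * a⁻¹ := le_of_tendsto hlim' <| by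
    filter_upwards [eventually_ge_atTop a] with t ht using hanti (mem_Ici.2 le_rfl) ht ht
  rw [div_eq_mul_inv]
  linarith

lemma integral_Ioi_min_sub_min_div_sq {l : ℝ} (hl : 1 < l) :
    ∫ v in Ioi 0, (min v l - min v 1) / v ^ 2 = Real.log l := by
  have hl0 : 0 < l := by linarith
  set f : ℝ → ℝ := fun v => (min v l - min v 1) / v ^ 2 with hf
  have h₁ : EqOn f (fun _ => 0) (Ioc 0 1) := fun v hv => by
    simp [hf, min_eq_left hv.2, min_eq_left (hv.2.trans hl.le)]
  have h₂ : EqOn f (fun v => (v - 1) / v ^ 2) (Ioc 1 l) := fun v hv => by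
    simp only [hf, min_eq_left hv.2, min_eq_right hv.1.le]
  have h₃ : EqOn f (fun v => (l - 1) * (v ^ 2)⁻¹) (Ioi l) := fun v hv => by
    simp only [hf, min_eq_right (mem_Ioi.1 hv).le, min_eq_right (hl.le.trans (mem_Ioi.1 hv).le),
      div_eq_mul_inv]
  have hderiv₂ : ∀ v ∈ uIcc 1 l, HasDerivAt (fun v => Real.log v + v⁻¹) ((v - 1) / v ^ 2) v := by
    intro v hv
    have hv0 : v ≠ 0 := by rw [uIcc_of_le hl.le] at hv; linarith [hv.1]
    exact ((Real.hasDerivAt_log hv0).add (hasDerivAt_inv hv0)).congr_deriv (by field_simp; ring)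
  have hcont₂ : ContinuousOn (fun v : ℝ => (v - 1) / v ^ 2) (uIcc 1 l) :=
    (continuousOn_id.sub continuousOn_const).div (continuousOn_pow 2) fun v hv => by
      rw [uIcc_of_le hl.le] at hv; have := hv.1; positivity
  have i₁ : IntegrableOn f (Ioc 0 1) := integrableOn_zero.congr_fun h₁.symm measurableSet_Ioc
  have i₂ : IntegrableOn f (Ioc 1 l) := by
    refine IntegrableOn.congr_fun ?_ h₂.symm measurableSet_Ioc
    exact (hcont₂.intervalIntegrable).1
  have i₃ : IntegrableOn f (Ioi l) :=
    IntegrableOn.congr_fun ((integrableOn_Ioi_inv_sq hl0).const_mul _) h₃.symm measurableSet_Ioi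
  have v₂ : ∫ v in Ioc 1 l, f v = Real.log l + l⁻¹ - 1 := by
    rw [setIntegral_congr_fun measurableSet_Ioc h₂, ← intervalIntegral.integral_of_le hl.le,
      intervalIntegral.integral_eq_sub_of_hasDerivAt hderiv₂ hcont₂.intervalIntegrable]
    simp
  have v₃ : ∫ v in Ioi l, f v = (l - 1) * l⁻¹ := by
    rw [setIntegral_congr_fun measurableSet_Ioi h₃, integral_const_mul, integral_Ioi_inv_sq hl0]
  rw [← Ioc_union_Ioi_eq_Ioi zero_le_one, setIntegral_union (Ioc_disjoint_Ioi le_rfl)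
      measurableSet_Ioi i₁ (by rw [← Ioc_union_Ioi_eq_Ioi hl.le]; exact i₂.union i₃),
    setIntegral_congr_fun measurableSet_Ioc h₁, ← Ioc_union_Ioi_eq_Ioi hl.le,
    setIntegral_union (Ioc_disjoint_Ioi le_rfl) measurableSet_Ioi i₂ i₃, v₂, v₃, integral_zero]
  field_simp
  ring

def secondDiff (f : ℝ → ℝ) (z y : ℝ) : ℝ := f (z + y) - 2 * f z + f (z - y)

lemma halfLap_eq (u : ℝ → ℝ) (x : ℝ) :
    halfLap u x = -(1 / Real.pi) * ∫ y in Ioi 0, secondDiff u x y / y ^ 2 := rfl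

lemma hasDerivAt_secondDiff {f f' : ℝ → ℝ} (hf : ∀ x, HasDerivAt f (f' x) x) (z y : ℝ) :
    HasDerivAt (fun u => secondDiff f u y) (secondDiff f' z y) z := by
  have h₁ := (hf (z + y)).comp_add_const z y
  have h₂ := (hf (z - y)).comp_sub_const z y
  exact ((h₁.sub ((hf z).const_mul 2)).add h₂)

lemma abs_secondDiff_le {f f' f'' : ℝ → ℝ} {z y C : ℝ} (hf : ∀ x, HasDerivAt f (f' x) x)
    (hf' : ∀ x, HasDerivAt f' (f'' x) x) (hy : 0 ≤ y)
    (hC : ∀ t ∈ Icc (z - y) (z + y), |f'' t| ≤ C) :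
    |secondDiff f z y| ≤ C * y ^ 2 := by
  have hderiv : ∀ s, HasDerivAt (secondDiff f z) (f' (z + s) - f' (z - s)) s := by
    intro s
    have h₁ := (hf (z + s)).comp_const_add z s
    have h₂ := ((hf (z - s)).comp_const_sub z s)
    exact ((h₁.sub_const (2 * f z)).add h₂).congr_deriv (by ring)
  have hlip : ∀ s ∈ Ico 0 y, ‖f' (z + s) - f' (z - s)‖ ≤ 2 * C * s := by
    intro s hs
    have := (convex_Icc (z - y) (z + y)).norm_image_sub_le_of_norm_hasDerivWithin_le
      (fun t _ => (hf' t).hasDerivWithinAt) (fun t ht => hC t ht)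
      (x := z - s) (y := z + s) ⟨by linarith [hs.2], by linarith [hs.1]⟩
      ⟨by linarith [hs.1], by linarith [hs.2]⟩
    rw [Real.norm_eq_abs (z + s - (z - s)), abs_of_nonneg (by linarith [hs.1])] at this
    linarith
  have := image_norm_le_of_norm_deriv_right_le_deriv_boundary (a := 0) (b := y)
    (B := fun s => C * s ^ 2) (B' := fun s => 2 * C * s)
    (fun s _ => (hderiv s).continuousAt.continuousWithinAt)
    (fun s _ => (hderiv s).hasDerivWithinAt) (by simp [secondDiff]; ring)
    (fun s => ((hasDerivAt_pow 2 s).const_mul C).congr_deriv (by ring)) hlip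
    (right_mem_Icc.2 hy)
  simpa using this

lemma abs_secondDiff_le_of_abs_le {f : ℝ → ℝ} {M : ℝ} (hM : ∀ x, |f x| ≤ M) (z y : ℝ) :
    |secondDiff f z y| ≤ 4 * M := by
  have h₁ := abs_le.1 (hM (z + y))
  have h₂ := abs_le.1 (hM z)
  have h₃ := abs_le.1 (hM (z - y))
  rw [secondDiff, abs_le]
  constructor <;> linarith [h₁.1, h₁.2, h₂.1, h₂.2, h₃.1, h₃.2]

lemma halfLap_const_sub_comp_neg (u : ℝ → ℝ) (a x : ℝ) :
    halfLap (fun x => a - u (-x)) x = -halfLap u (-x) := by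
  simp only [halfLap_eq, ← mul_neg, ← integral_neg]
  congr 2 with y
  simp only [secondDiff]
  ring_nf

noncomputable def primitive (η : ℝ → ℝ) (x : ℝ) : ℝ := ∫ t in (0 : ℝ)..x, η t

section Primitive

variable {η : ℝ → ℝ} {B : ℝ}

lemma hasDerivAt_primitive (hη : Continuous η) (x : ℝ) : HasDerivAt (primitive η) (η x) x :=
  intervalIntegral.integral_hasDerivAt_right (hη.intervalIntegrable _ _)
    (hη.stronglyMeasurableAtFilter _ _) hη.continuousAt

lemma continuous_primitive (hη : Continuous η) : Continuous (primitive η) :=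
  continuous_iff_continuousAt.2 fun x => (hasDerivAt_primitive hη x).continuousAt

lemma abs_primitive_sub_le {M : ℝ} (hη : Continuous η) (hM : ∀ x, |η x| ≤ M) (a b : ℝ) :
    |primitive η a - primitive η b| ≤ M * |a - b| := by
  rw [primitive, primitive, intervalIntegral.integral_interval_sub_left
    (hη.intervalIntegrable _ _) (hη.intervalIntegrable _ _)]
  exact intervalIntegral.norm_integral_le_of_norm_le_const fun t _ =>
    (Real.norm_eq_abs _).trans_le (hM t)

lemma abs_secondDiff_primitive_sub_le {M : ℝ} (hη : Continuous η) (hM : ∀ x, |η x| ≤ M)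
    (z w y : ℝ) :
    |secondDiff (primitive η) z y - secondDiff (primitive η) w y| ≤ 4 * M * |z - w| := by
  have h₁ := abs_primitive_sub_le hη hM (z + y) (w + y)
  have h₂ := abs_primitive_sub_le hη hM z w
  have h₃ := abs_primitive_sub_le hη hM (z - y) (w - y)
  rw [show z + y - (w + y) = z - w by ring] at h₁
  rw [show z - y - (w - y) = z - w by ring] at h₃
  rw [abs_le] at h₁ h₂ h₃
  rw [secondDiff, secondDiff, abs_le]
  constructor <;> linarith [h₁.1, h₁.2, h₂.1, h₂.2, h₃.1, h₃.2]

lemma abs_secondDiff_primitive_le {z y C : ℝ} (hη : ContDiff ℝ 1 η) (hy : 0 ≤ y)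
    (hC : ∀ t ∈ Icc (z - y) (z + y), |deriv η t| ≤ C) :
    |secondDiff (primitive η) z y| ≤ C * y ^ 2 :=
  abs_secondDiff_le (hasDerivAt_primitive hη.continuous)
    (fun x => ((hη.differentiable one_ne_zero) x).hasDerivAt) hy hC

lemma integrableOn_secondDiff_primitive_sub {M : ℝ} (hη : ContDiff ℝ 1 η)
    (hM : ∀ x, |η x| ≤ M) (z w : ℝ) :
    IntegrableOn (fun y => (secondDiff (primitive η) z y - secondDiff (primitive η) w y) / y ^ 2)
      (Ioi 0) := by
  obtain ⟨C, hC⟩ := (isCompact_Icc (a := -(|z| + |w| + 1)) (b := |z| + |w| + 1)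
    ).exists_bound_of_continuousOn (hη.continuous_deriv le_rfl).continuousOn
  have hΦ := continuous_primitive hη.continuous
  refine integrableOn_Ioi_div_sq_of_bound one_pos
    (by unfold secondDiff; fun_prop) (C₁ := 2 * C) (fun y hy hy1 => ?_)
    fun y _ => abs_secondDiff_primitive_sub_le hη.continuous hM z w y
  have hbound : ∀ u, |u| ≤ |z| + |w| → |secondDiff (primitive η) u y| ≤ C * y ^ 2 := by
    intro u hu
    refine abs_secondDiff_primitive_le hη hy.le fun t ht => hC t ⟨?_, ?_⟩ <;>
      linarith [ht.1, ht.2, abs_le.1 hu]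
  have hz := hbound z (by linarith [abs_nonneg w])
  have hw := hbound w (by linarith [abs_nonneg z])
  calc _ ≤ |secondDiff (primitive η) z y| + |secondDiff (primitive η) w y| := abs_sub _ _
    _ ≤ 2 * C * y ^ 2 := by linarith

lemma hasDerivAt_integral_secondDiff_primitive {M : ℝ} (hη : ContDiff ℝ 2 η)
    (hM : ∀ x, |η x| ≤ M) (z : ℝ) :
    HasDerivAt (fun u => ∫ y in Ioi 0,
        (secondDiff (primitive η) u y - secondDiff (primitive η) 0 y) / y ^ 2)
      (∫ y in Ioi 0, secondDiff η z y / y ^ 2) z := by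
  have hη' : ContDiff ℝ 1 (deriv η) := hη.deriv' (n := 1)
  have hc := hη.continuous
  have hΦ := continuous_primitive hc
  obtain ⟨C, hC⟩ := (isCompact_Icc (a := z - 2) (b := z + 2)).exists_bound_of_continuousOn
    (hη'.continuous_deriv le_rfl).continuousOn
  have hy2 : ∀ y ∈ Ioi (0 : ℝ), y ^ 2 ≠ 0 := fun y hy => pow_ne_zero 2 (ne_of_gt hy)
  refine (hasDerivAt_integral_of_dominated_loc_of_deriv_le (μ := volume.restrict (Ioi 0))
    (F := fun u y => (secondDiff (primitive η) u y - secondDiff (primitive η) 0 y) / y ^ 2)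
    (F' := fun u y => secondDiff η u y / y ^ 2)
    (bound := fun y => if y ≤ 1 then C else 4 * M * (y ^ 2)⁻¹) (Metric.ball_mem_nhds z one_pos)
    (Eventually.of_forall fun u => ?_)
    (integrableOn_secondDiff_primitive_sub (hη.of_le one_le_two) hM z 0)
    ?_ ?_ (integrableOn_Ioi_ite_inv_sq one_pos C (4 * M)) ?_).2
  · exact ((by unfold secondDiff; fun_prop : Continuous _).continuousOn.div (by fun_prop)
      hy2).aestronglyMeasurable measurableSet_Ioi
  · exact ((by unfold secondDiff; fun_prop : Continuous _).continuousOn.div (by fun_prop)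
      hy2).aestronglyMeasurable measurableSet_Ioi
  · refine (ae_restrict_iff' measurableSet_Ioi).2 (Eventually.of_forall fun y hy u hu => ?_)
    rw [Metric.mem_ball, Real.dist_eq, abs_lt] at hu
    refine abs_div_sq_le_ite hy (fun hy1 => ?_) fun _ => abs_secondDiff_le_of_abs_le hM u y
    refine abs_secondDiff_le (fun x => ((hη.differentiable two_ne_zero) x).hasDerivAt)
      (fun x => ((hη'.differentiable one_ne_zero) x).hasDerivAt) (le_of_lt hy)
      fun t ht => hC t ⟨?_, ?_⟩ <;> linarith [ht.1, ht.2]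
  · refine (ae_restrict_iff' measurableSet_Ioi).2 (Eventually.of_forall fun y _ u _ => ?_)
    exact ((hasDerivAt_secondDiff (hasDerivAt_primitive hc) u y).sub_const _).div_const _

lemma integral_halfLap_eq {M : ℝ} (hη : ContDiff ℝ 2 η) (hM : ∀ x, |η x| ≤ M)
    (hcont : Continuous (halfLap η)) (a b : ℝ) :
    ∫ t in a..b, halfLap η t = -(1 / Real.pi) * ∫ y in Ioi 0,
      (secondDiff (primitive η) b y - secondDiff (primitive η) a y) / y ^ 2 := by
  rw [intervalIntegral.integral_eq_sub_of_hasDerivAt (f' := halfLap η) (fun t _ =>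
      (hasDerivAt_integral_secondDiff_primitive hη hM t).const_mul (-(1 / Real.pi)))
      (hcont.intervalIntegrable a b), ← mul_sub, ← integral_sub
      (integrableOn_secondDiff_primitive_sub (hη.of_le one_le_two) hM b 0)
      (integrableOn_secondDiff_primitive_sub (hη.of_le one_le_two) hM a 0)]
  congr 2 with y
  ring

lemma tendsto_primitive_mul_div {M ηl ηr : ℝ} (hη : Continuous η) (hM : ∀ x, |η x| ≤ M)
    (hbot : Tendsto η atBot (𝓝 ηl)) (htop : Tendsto η atTop (𝓝 ηr)) (a : ℝ) :
    Tendsto (fun x => primitive η (a * x) / x) atTop (𝓝 (a * if 0 < a then ηr else ηl)) := by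
  have hsub : ∀ x, 0 < x → primitive η (a * x) / x = ∫ u in 0..a, η (x * u) := by
    intro x hx
    rw [intervalIntegral.integral_comp_mul_left _ hx.ne', mul_zero, smul_eq_mul, primitive,
      mul_comm a x, inv_mul_eq_div]
  have hlim : Tendsto (fun x => ∫ u in 0..a, η (x * u)) atTop
      (𝓝 (∫ _ in 0..a, if 0 < a then ηr else ηl)) := by
    refine intervalIntegral.tendsto_integral_filter_of_dominated_convergence (fun _ => M)
      (Eventually.of_forall fun x => (by fun_prop : Continuous _).aestronglyMeasurable)
      (Eventually.of_forall fun x => ae_of_all _ fun u _ => (Real.norm_eq_abs _).trans_le (hM _))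
      intervalIntegrable_const ?_
    filter_upwards [Measure.ae_ne volume 0] with u hu0 hu
    split_ifs with ha
    · rw [uIoc_of_le ha.le] at hu
      exact htop.comp (tendsto_id.atTop_mul_const hu.1)
    · rw [uIoc_of_ge (not_lt.1 ha)] at hu
      exact hbot.comp (tendsto_id.atTop_mul_const_of_neg (lt_of_le_of_ne hu.2 hu0))
  rw [intervalIntegral.integral_const, smul_eq_mul, sub_zero] at hlim
  exact hlim.congr' (by filter_upwards [eventually_gt_atTop 0] with x hx using (hsub x hx).symm)

lemma secondDiff_sub_secondDiff_ramp (ηl ηr : ℝ) {l v : ℝ} (hl : 1 < l) (hv : 0 ≤ v) :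
    secondDiff (fun a => a * if 0 < a then ηr else ηl) l v -
      secondDiff (fun a => a * if 0 < a then ηr else ηl) 1 v =
        -(ηr - ηl) * (min v l - min v 1) := by
  simp only [secondDiff]
  rw [if_pos (by linarith : (0:ℝ) < l + v), if_pos (by linarith : (0:ℝ) < l),
    if_pos (by linarith : (0:ℝ) < 1 + v), if_pos one_pos]
  rcases lt_or_ge v 1 with h1 | h1
  · rw [if_pos (by linarith : (0:ℝ) < l - v), if_pos (by linarith : (0:ℝ) < 1 - v),
      min_eq_left (by linarith), min_eq_left h1.le]
    ring
  rw [if_neg (by linarith : ¬ (0:ℝ) < 1 - v), min_eq_right h1]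
  rcases lt_or_ge v l with h2 | h2
  · rw [if_pos (by linarith : (0:ℝ) < l - v), min_eq_left h2.le]
    ring
  · rw [if_neg (by linarith : ¬ (0:ℝ) < l - v), min_eq_right h2]
    ring

lemma abs_secondDiff_primitive_le_of_decay (hη : ContDiff ℝ 1 η) (hmono : Monotone η)
    (hdecay : ∀ t, 1 ≤ t → deriv η t ≤ B / t ^ 2) {x z v : ℝ} (hx : 2 ≤ x) (hz : x ≤ z)
    (hv : 0 ≤ v) (hv2 : v ≤ 1 / 2) :
    |secondDiff (primitive η) z (x * v)| ≤ 4 * B * v ^ 2 := by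
  have hB : 0 ≤ B := by simpa using hmono.deriv_nonneg.trans (hdecay 1 le_rfl)
  have hx0 : 0 < x := by linarith
  have hxv : x * v ≤ x / 2 := by nlinarith
  calc |secondDiff (primitive η) z (x * v)| ≤ 4 * B / x ^ 2 * (x * v) ^ 2 := by
        refine abs_secondDiff_primitive_le hη (by positivity) fun t ht => ?_
        have ht : x / 2 ≤ t := by linarith [ht.1]
        rw [abs_of_nonneg hmono.deriv_nonneg]
        calc deriv η t ≤ B / t ^ 2 := hdecay t (by linarith)
          _ ≤ B / (x / 2) ^ 2 := by gcongr
          _ = 4 * B / x ^ 2 := by ring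
    _ = 4 * B * v ^ 2 := by field_simp

lemma abs_secondDiff_primitive_scaled_le {ηl ηr l x v : ℝ} (hη : ContDiff ℝ 1 η)
    (hmono : Monotone η) (hbot : Tendsto η atBot (𝓝 ηl)) (htop : Tendsto η atTop (𝓝 ηr))
    (hdecay : ∀ x, 1 ≤ x → deriv η x ≤ B / x ^ 2) (hl : 1 < l) (hx : 2 ≤ x) (hv : 0 < v) :
    |(secondDiff (primitive η) (l * x) (x * v) - secondDiff (primitive η) x (x * v)) / x / v ^ 2|
      ≤ if v ≤ 1 / 2 then 8 * B else 4 * max |ηl| |ηr| * (l - 1) * (v ^ 2)⁻¹ := by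
  have hx0 : 0 < x := by linarith
  refine abs_div_sq_le_ite hv (fun hv2 => ?_) fun _ => ?_
  · have h₁ := abs_secondDiff_primitive_le_of_decay hη hmono hdecay hx
      (by nlinarith : x ≤ l * x) hv.le hv2
    have h₂ := abs_secondDiff_primitive_le_of_decay hη hmono hdecay hx le_rfl hv.le hv2
    rw [abs_div, abs_of_pos hx0]
    refine (div_le_self (by positivity) (by linarith)).trans ?_
    exact (abs_sub _ _).trans (by linarith)
  · have h := abs_secondDiff_primitive_sub_le hη.continuous (hmono.abs_le_max_of_tendsto hbot htop)
      (l * x) x (x * v)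
    rw [show l * x - x = (l - 1) * x by ring, abs_of_pos (show 0 < (l - 1) * x by nlinarith)] at h
    rw [abs_div, abs_of_pos hx0, div_le_iff₀ hx0]
    linarith

lemma tendsto_integral_secondDiff_primitive_sub {ηl ηr l : ℝ} (hη : ContDiff ℝ 1 η)
    (hmono : Monotone η) (hbot : Tendsto η atBot (𝓝 ηl)) (htop : Tendsto η atTop (𝓝 ηr))
    (hdecay : ∀ x, 1 ≤ x → deriv η x ≤ B / x ^ 2) (hl : 1 < l) :
    Tendsto (fun x => ∫ y in Ioi 0,
        (secondDiff (primitive η) (l * x) y - secondDiff (primitive η) x y) / y ^ 2) atTop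
      (𝓝 (-(ηr - ηl) * Real.log l)) := by
  set Φ := primitive η
  have hΦ : Continuous Φ := continuous_primitive hη.continuous
  set G : ℝ → ℝ → ℝ := fun x v =>
    (secondDiff Φ (l * x) (x * v) - secondDiff Φ x (x * v)) / x / v ^ 2
  have hlimit : ∀ v, 0 < v → Tendsto (fun x => G x v) atTop
      (𝓝 (-(ηr - ηl) * ((min v l - min v 1) / v ^ 2))) := by
    intro v hv
    have hlim := tendsto_primitive_mul_div hη.continuous
      (hmono.abs_le_max_of_tendsto hbot htop) hbot htop
    have hcomb := ((((hlim (l + v)).sub ((hlim l).const_mul 2)).add (hlim (l - v))).sub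
      (((hlim (1 + v)).sub ((hlim 1).const_mul 2)).add (hlim (1 - v)))).div_const (v ^ 2)
    rw [← mul_div_assoc, ← secondDiff_sub_secondDiff_ramp ηl ηr hl hv.le]
    refine hcomb.congr fun x => ?_
    simp only [G, Φ, secondDiff]
    ring_nf
  have hbound : ∀ᶠ x in atTop, ∀ᵐ v ∂(volume.restrict (Ioi 0)),
      ‖G x v‖ ≤ if v ≤ 1 / 2 then 8 * B else 4 * max |ηl| |ηr| * (l - 1) * (v ^ 2)⁻¹ := by
    filter_upwards [eventually_ge_atTop 2] with x hx
    exact (ae_restrict_iff' measurableSet_Ioi).2 (Eventually.of_forall fun v hv =>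
      abs_secondDiff_primitive_scaled_le hη hmono hbot htop hdecay hl hx hv)
  have hmeas : ∀ᶠ x in atTop, AEStronglyMeasurable (G x) (volume.restrict (Ioi 0)) :=
    Eventually.of_forall fun x => ((by unfold secondDiff; fun_prop : Continuous _).continuousOn.div
      (by fun_prop) fun v hv => pow_ne_zero 2 (ne_of_gt hv)).aestronglyMeasurable measurableSet_Ioi
  have hdct := tendsto_integral_filter_of_dominated_convergence _ hmeas hbound
    (integrableOn_Ioi_ite_inv_sq (by norm_num) _ _)
    ((ae_restrict_iff' measurableSet_Ioi).2 (Eventually.of_forall hlimit))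
  rw [integral_const_mul, integral_Ioi_min_sub_min_div_sq hl] at hdct
  exact hdct.congr' (by filter_upwards [eventually_gt_atTop 0] with x hx using
    (integral_Ioi_div_sq_eq_comp_mul
      (g := fun y => secondDiff Φ (l * x) y - secondDiff Φ x y) hx).symm)

end Primitive

section Profile

variable {η f : ℝ → ℝ} {ηl ηr B c K : ℝ}

lemma tendsto_integral_halfLap {l : ℝ} (hη : ContDiff ℝ 2 η) (hmono : Monotone η)
    (hbot : Tendsto η atBot (𝓝 ηl)) (htop : Tendsto η atTop (𝓝 ηr))
    (hdecay : ∀ x, 1 ≤ x → deriv η x ≤ B / x ^ 2) (hcont : Continuous (halfLap η)) (hl : 1 < l) :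
    Tendsto (fun x => ∫ t in x..l * x, halfLap η t) atTop
      (𝓝 ((ηr - ηl) * Real.log l / Real.pi)) := by
  have hM := hmono.abs_le_max_of_tendsto hbot htop
  simp_rw [integral_halfLap_eq hη hM hcont]
  convert ((tendsto_integral_secondDiff_primitive_sub (hη.of_le one_le_two) hmono hbot htop
    hdecay hl).const_mul (-(1 / Real.pi))) using 2
  ring

lemma isBigO_sub_inv_atTop_of_deriv_le (hη : Differentiable ℝ η) (htop : Tendsto η atTop (𝓝 ηr))
    (hmono : Monotone η) (hdecay : ∀ x, 1 ≤ x → deriv η x ≤ B / x ^ 2) :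
    (fun x => η x - ηr) =O[atTop] fun x => x⁻¹ := by
  refine IsBigO.of_bound B ?_
  filter_upwards [eventually_ge_atTop 1] with x hx
  have hx0 : 0 < x := by linarith
  rw [Real.norm_eq_abs, abs_of_nonpos (by linarith [hmono.ge_of_tendsto htop x]),
    Real.norm_of_nonneg (inv_nonneg.2 hx0.le), ← div_eq_mul_inv, neg_sub]
  exact sub_le_div_of_deriv_le_div_sq hη hx0 (fun t ht => hdecay t (hx.trans ht)) htop

theorem tendsto_mul_sub_atTop_of_halfLap_eq (hη : ContDiff ℝ 2 η) (hmono : Monotone η)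
    (hbot : Tendsto η atBot (𝓝 ηl)) (htop : Tendsto η atTop (𝓝 ηr))
    (hdecay : ∀ x, 1 ≤ x → deriv η x ≤ B / x ^ 2) (hf : Continuous f) (hfr : f ηr = 0)
    (hK : HasDerivAt f K ηr) (hK0 : K ≠ 0)
    (heq : ∀ x, -halfLap η x + c * deriv η x = f (η x)) :
    Tendsto (fun x => x * (η x - ηr)) atTop (𝓝 ((ηl - ηr) / (Real.pi * K))) := by
  have hη' : Continuous (deriv η) := hη.continuous_deriv one_le_two
  have hhalf : halfLap η = fun x => c * deriv η x - f (η x) :=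
    funext fun x => by linarith [heq x]
  have hfη : ∀ l, 1 < l → Tendsto (fun x => ∫ t in x..l * x, f (η t)) atTop
      (𝓝 (-((ηr - ηl) * Real.log l / Real.pi))) := by
    intro l hl
    have hη_lx : Tendsto (fun x => η (l * x)) atTop (𝓝 ηr) :=
      htop.comp (tendsto_id.const_mul_atTop (by linarith))
    have hlim := ((hη_lx.sub htop).const_mul c).sub (tendsto_integral_halfLap hη hmono hbot htop
      hdecay (by rw [hhalf]; fun_prop) hl)
    rw [sub_self, mul_zero, zero_sub] at hlim
    refine hlim.congr fun x => ?_
    rw [hhalf, intervalIntegral.integral_sub (Continuous.intervalIntegrable (by fun_prop) _ _)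
      (Continuous.intervalIntegrable (by fun_prop) _ _),
      intervalIntegral.integral_const_mul, intervalIntegral.integral_deriv_eq_sub
      (fun t _ => (hη.differentiable two_ne_zero) t) (hη'.intervalIntegrable _ _)]
    ring
  have ho : (fun t => f (η t) - K * (η t - ηr)) =o[atTop] fun t => t⁻¹ := by
    refine ((hK.isLittleO.comp_tendsto htop).trans_isBigO
      (isBigO_sub_inv_atTop_of_deriv_le (hη.differentiable two_ne_zero) htop hmono hdecay)
      ).congr_left fun t => ?_
    simp [hfr, mul_comm]
  have hmono' : Monotone fun x => η x - ηr := fun a b h => sub_le_sub_right (hmono h) ηr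
  refine hmono'.tendsto_mul_of_tendsto_integral fun l hl => ?_
  have hlim := ((hfη l hl).sub (tendsto_integral_of_isLittleO_inv ho hl)).const_mul K⁻¹
  convert hlim using 2 with x
  · rw [intervalIntegral.integral_sub (f := fun t => f (η t)) (g := fun t => K * (η t - ηr))
      (Continuous.intervalIntegrable (by fun_prop) _ _)
      (Continuous.intervalIntegrable (by fun_prop) _ _), intervalIntegral.integral_const_mul,
      sub_sub_cancel, inv_mul_cancel_left₀ hK0]
  · field_simp
    ring

theorem tendsto_mul_sub_atBot_of_halfLap_eq (hη : ContDiff ℝ 2 η) (hmono : Monotone η)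
    (hbot : Tendsto η atBot (𝓝 ηl)) (htop : Tendsto η atTop (𝓝 ηr))
    (hdecay : ∀ x, x ≤ -1 → deriv η x ≤ B / x ^ 2) (hf : Continuous f) (hfl : f ηl = 0)
    (hK : HasDerivAt f K ηl) (hK0 : K ≠ 0)
    (heq : ∀ x, -halfLap η x + c * deriv η x = f (η x)) :
    Tendsto (fun x => x * (η x - ηl)) atBot (𝓝 ((ηl - ηr) / (Real.pi * K))) := by
  set S := ηl + ηr
  have hderiv : ∀ x, HasDerivAt (fun x => S - η (-x)) (deriv η (-x)) x := fun x => by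
    simpa using
      ((hη.differentiable two_ne_zero (-x)).hasDerivAt.comp x (hasDerivAt_neg x)).const_sub S
  have hK' : HasDerivAt (fun v => -f (S - v)) K ηr := by
    have h := ((show ηl = S - ηr by ring) ▸ hK).comp ηr ((hasDerivAt_id ηr).const_sub S)
    exact h.neg.congr_deriv (by ring)
  have h := tendsto_mul_sub_atTop_of_halfLap_eq (η := fun x => S - η (-x))
    (f := fun v => -f (S - v)) (c := -c) (contDiff_const.sub (hη.comp contDiff_neg))
    (fun a b hab => sub_le_sub_left (hmono (neg_le_neg hab)) S)
    (by simpa [S] using (htop.comp tendsto_neg_atBot_atTop).const_sub S)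
    (by simpa [S] using (hbot.comp tendsto_neg_atTop_atBot).const_sub S)
    (fun x hx => by simpa [(hderiv x).deriv] using hdecay (-x) (by linarith))
    (by fun_prop) (by simp [S, hfl]) hK' hK0 fun x => ?_
  · refine (h.comp tendsto_neg_atBot_atTop).congr fun x => ?_
    simp only [Function.comp_apply, neg_neg, S]
    ring
  · rw [halfLap_const_sub_comp_neg, (hderiv x).deriv, sub_sub_cancel, ← heq (-x)]
    ring

end Profile

theorem weertman_asymptotes_general
    (ηl ηr : ℝ)
    (F : ℝ → ℝ) (hF : ContDiff ℝ 3 F)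
    (hFl : deriv F ηl = 0) (hFr : deriv F ηr = 0)
    (hFl2 : 0 < deriv (deriv F) ηl) (hFr2 : 0 < deriv (deriv F) ηr)
    (η : ℝ → ℝ) (c : ℝ)
    (hη : ContDiff ℝ 2 η)
    (hη' : ∀ x, 0 < deriv η x)
    (hbot : Tendsto η atBot (nhds ηl)) (htop : Tendsto η atTop (nhds ηr))
    (heq : ∀ x, -halfLap η x + c * deriv η x = deriv F (η x))
    (hdecay : ∃ A B : ℝ, 0 < A ∧ A < B ∧ ∀ x : ℝ, 1 ≤ |x| →
      A / |x| ^ 2 ≤ deriv η x ∧ deriv η x ≤ B / |x| ^ 2) :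
    Tendsto (fun x => x * (η x - ηr)) atTop
      (nhds ((ηl - ηr) / (Real.pi * deriv (deriv F) ηr))) ∧
    Tendsto (fun x => x * (η x - ηl)) atBot
      (nhds ((ηl - ηr) / (Real.pi * deriv (deriv F) ηl))) := by
  obtain ⟨_, B, -, -, hB⟩ := hdecay
  have hdecay : ∀ x, 1 ≤ |x| → deriv η x ≤ B / x ^ 2 := fun x hx => by
    simpa only [sq_abs] using (hB x hx).2
  have hmono : Monotone η := (strictMono_of_deriv_pos hη').monotone
  have hF' : ContDiff ℝ 2 (deriv F) := hF.deriv' (n := 2)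
  have hK : ∀ v, HasDerivAt (deriv F) (deriv (deriv F) v) v := fun v =>
    (hF'.differentiable two_ne_zero v).hasDerivAt
  exact ⟨tendsto_mul_sub_atTop_of_halfLap_eq hη hmono hbot htop
      (fun x hx => hdecay x (hx.trans (le_abs_self x))) hF'.continuous hFr (hK ηr) hFr2.ne' heq,
    tendsto_mul_sub_atBot_of_halfLap_eq hη hmono hbot htop
      (fun x hx => hdecay x ((by linarith : (1:ℝ) ≤ -x).trans (neg_le_abs x))) hF'.continuous hFl
      (hK ηl) hFl2.ne' heq⟩

/-- Asymptotes of the Weertman profile (Proposition 1). -/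
theorem weertman_asymptotes
    (ηl ηr : ℝ) (hlr : ηl < ηr)
    (F : ℝ → ℝ) (hF : ContDiff ℝ 3 F)
    (hFl : deriv F ηl = 0) (hFr : deriv F ηr = 0)
    (hFl2 : 0 < deriv (deriv F) ηl) (hFr2 : 0 < deriv (deriv F) ηr)
    (η : ℝ → ℝ) (c : ℝ)
    (hη : ContDiff ℝ 2 η)
    (hη' : ∀ x, 0 < deriv η x)
    (hbot : Tendsto η atBot (nhds ηl)) (htop : Tendsto η atTop (nhds ηr))
    (heq : ∀ x, -halfLap η x + c * deriv η x = deriv F (η x))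
    (hdecay : ∃ A B : ℝ, 0 < A ∧ A < B ∧ ∀ x : ℝ, 1 ≤ |x| →
      A / |x| ^ 2 ≤ deriv η x ∧ deriv η x ≤ B / |x| ^ 2) :
    Tendsto (fun x => x * (η x - ηr)) atTop
      (nhds ((ηl - ηr) / (Real.pi * deriv (deriv F) ηr))) ∧
    Tendsto (fun x => x * (η x - ηl)) atBot
      (nhds ((ηl - ηr) / (Real.pi * deriv (deriv F) ηl))) :=
  weertman_asymptotes_general ηl ηr F hF hFl hFr hFl2 hFr2 η c hη hη' hbot htop heq hdecay
end

section
/- Let η_l < η_r and let F : ℝ → ℝ be of class C³ and bistable between η_l and η_r. Let (η, c) be a Weertman profile with velocity c for the potential F. Then the second derivative η'' is bounded on ℝ. -/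
open MeasureTheory Filter Set

/-!
For `0 < h ≤ 1` the second difference `w = Δ_h Δ_h η` solves the profile equation with
right-hand side `G = Δ_h Δ_h (F' ∘ η)`, and `w → 0` at `±∞`, so a positive supremum or negative
infimum of `w` is attained. There `w' = 0` and `|∂x| w` has a sign, so `G` has the sign opposite
to `w`. Far out, `η` stays near a well where `F'' ≥ m > 0`, and the mean value theorem gives
`G = κ w + O(h²)` with `κ ≥ m`, so the extremal value is `O(h²)`; on the remaining compact set
`|w| ≤ h² sup |η''|`. Since `w / h² → η''` as `h → 0`, `η''` is bounded.
-/

open scoped fwdDiff Topology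

section SecondDifference

variable {f : ℝ → ℝ} {h : ℝ}

lemma ContDiff.fwdDiff {n : WithTop ℕ∞} (hf : ContDiff ℝ n f) (h : ℝ) :
    ContDiff ℝ n (Δ_[h] f) :=
  (hf.comp (contDiff_id.add contDiff_const)).sub hf

lemma abs_fwdDiff_le {C : ℝ} (hf : ∀ x, |f x| ≤ C) (h x : ℝ) : |Δ_[h] f x| ≤ 2 * C := by
  have := abs_sub (f (x + h)) (f x)
  simp only [fwdDiff]
  linarith [hf (x + h), hf x]

lemma deriv_fwdDiff (hf : Differentiable ℝ f) (h x : ℝ) :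
    deriv (Δ_[h] f) x = Δ_[h] (deriv f) x := by
  have hshift : DifferentiableAt ℝ (fun y => f (y + h)) x :=
    (hf (x + h)).comp x (differentiableAt_id.add_const h)
  change deriv (fun y => f (y + h) - f y) x = _
  rw [deriv_fun_sub hshift (hf x), deriv_comp_add_const]
  rfl

lemma Filter.Tendsto.fwdDiff_atTop {a : ℝ} (hf : Tendsto f atTop (𝓝 a)) (h : ℝ) :
    Tendsto (Δ_[h] f) atTop (𝓝 0) := by
  change Tendsto (fun x => f (x + h) - f x) atTop (𝓝 0)
  simpa using (hf.comp (tendsto_atTop_add_const_right _ h tendsto_id)).sub hf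

lemma Filter.Tendsto.fwdDiff_atBot {a : ℝ} (hf : Tendsto f atBot (𝓝 a)) (h : ℝ) :
    Tendsto (Δ_[h] f) atBot (𝓝 0) := by
  change Tendsto (fun x => f (x + h) - f x) atBot (𝓝 0)
  simpa using (hf.comp (tendsto_atBot_add_const_right _ h tendsto_id)).sub hf

lemma exists_fwdDiff_fwdDiff_eq_mul_sq (hf : ContDiff ℝ 2 f) (hh : 0 < h) (x : ℝ) :
    ∃ ζ ∈ Ioo x (x + 2 * h), Δ_[h] (Δ_[h] f) x = deriv (deriv f) ζ * h ^ 2 := by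
  have hf₁ : Differentiable ℝ f := hf.differentiable (by norm_num)
  have hf₂ : Differentiable ℝ (deriv f) :=
    (show ContDiff ℝ 1 (deriv f) from hf.deriv').differentiable one_ne_zero
  have hg : Differentiable ℝ (Δ_[h] f) := (hf.fwdDiff h).differentiable (by norm_num)
  obtain ⟨ξ, hξ, hslope₁⟩ := exists_deriv_eq_slope (Δ_[h] f) (lt_add_of_pos_right x hh)
    hg.continuous.continuousOn hg.differentiableOn
  obtain ⟨ζ, hζ, hslope₂⟩ := exists_deriv_eq_slope (deriv f) (lt_add_of_pos_right ξ hh)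
    hf₂.continuous.continuousOn hf₂.differentiableOn
  refine ⟨ζ, ⟨by linarith [hξ.1, hζ.1], by linarith [hξ.2, hζ.2]⟩, ?_⟩
  rw [deriv_fwdDiff hf₁, add_sub_cancel_left, eq_div_iff hh.ne'] at hslope₁
  rw [add_sub_cancel_left, eq_div_iff hh.ne'] at hslope₂
  simp only [fwdDiff] at hslope₁ ⊢
  rw [← hslope₁, ← hslope₂]
  ring

lemma abs_fwdDiff_fwdDiff_le_mul_sq {C : ℝ} (hf : ContDiff ℝ 2 f) (hh : 0 < h) {x : ℝ}
    (hC : ∀ t ∈ Icc x (x + 2 * h), |deriv (deriv f) t| ≤ C) :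
    |Δ_[h] (Δ_[h] f) x| ≤ C * h ^ 2 := by
  obtain ⟨ζ, hζ, heq⟩ := exists_fwdDiff_fwdDiff_eq_mul_sq hf hh x
  rw [heq, abs_mul, abs_of_nonneg (sq_nonneg h)]
  exact mul_le_mul_of_nonneg_right (hC ζ (Ioo_subset_Icc_self hζ)) (sq_nonneg h)

lemma abs_deriv_deriv_le_of_abs_fwdDiff_fwdDiff_le {M : ℝ} (hf : ContDiff ℝ 2 f)
    (hM : ∀ h ∈ Ioc (0 : ℝ) 1, ∀ x, |Δ_[h] (Δ_[h] f) x| ≤ M * h ^ 2) (x : ℝ) :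
    |deriv (deriv f) x| ≤ M := by
  by_contra! hx
  have hcont : Continuous fun t => |deriv (deriv f) t| := by fun_prop
  obtain ⟨δ, hδ, hball⟩ :=
    Metric.eventually_nhds_iff.mp (hcont.continuousAt.eventually (lt_mem_nhds hx))
  set h := min 1 (δ / 4)
  have hh : 0 < h := lt_min one_pos (by positivity)
  obtain ⟨ζ, hζ, heq⟩ := exists_fwdDiff_fwdDiff_eq_mul_sq hf hh x
  have hζx : dist ζ x < δ := by
    rw [Real.dist_eq, abs_of_pos (by linarith [hζ.1])]
    linarith [hζ.2, min_le_right 1 (δ / 4)]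
  have hlt : M * h ^ 2 < |Δ_[h] (Δ_[h] f) x| := by
    rw [heq, abs_mul, abs_of_pos (by positivity : 0 < h ^ 2)]
    exact mul_lt_mul_of_pos_right (hball hζx) (by positivity)
  exact (hM h ⟨hh, min_le_left _ _⟩ x).not_gt hlt

end SecondDifference

section HalfLaplacian

variable {u : ℝ → ℝ}

lemma integrableOn_halfLap_integrand {C : ℝ} (hu : ContDiff ℝ 2 u) (hC : ∀ x, |u x| ≤ C)
    (x : ℝ) : IntegrableOn (fun y => (u (x + y) - 2 * u x + u (x - y)) / y ^ 2) (Ioi 0) := by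
  have hu_meas : Measurable u := hu.continuous.measurable
  have hmeas : AEStronglyMeasurable (fun y => (u (x + y) - 2 * u x + u (x - y)) / y ^ 2) :=
    (by fun_prop : Measurable fun y => (u (x + y) - 2 * u x + u (x - y)) / y ^ 2)
      |>.aestronglyMeasurable
  obtain ⟨C₂, hC₂⟩ := isCompact_Icc.exists_bound_of_continuousOn (s := Icc (x - 1) (x + 1))
    (by fun_prop : Continuous (deriv (deriv u))).continuousOn
  -- near `0` the numerator is a second difference of step `y`, hence `O(y ^ 2)`
  have hnear : IntegrableOn (fun y => (u (x + y) - 2 * u x + u (x - y)) / y ^ 2) (Ioc 0 1) := by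
    refine Measure.integrableOn_of_bounded (M := C₂) measure_Ioc_lt_top.ne hmeas ?_
    refine (ae_restrict_iff' measurableSet_Ioc).mpr (ae_of_all _ fun y ⟨hy₀, hy₁⟩ => ?_)
    have hdiff := abs_fwdDiff_fwdDiff_le_mul_sq hu hy₀ (x := x - y)
      fun t ht => hC₂ t ⟨by linarith [ht.1], by linarith [ht.2]⟩
    simp only [fwdDiff, sub_add_cancel] at hdiff
    rw [Real.norm_eq_abs, abs_div, abs_of_pos (by positivity : 0 < y ^ 2),
      div_le_iff₀ (by positivity), show u (x + y) - 2 * u x + u (x - y)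
        = u (x + y) - u x - (u x - u (x - y)) by ring]
    exact hdiff
  have hfar : IntegrableOn (fun y => (u (x + y) - 2 * u x + u (x - y)) / y ^ 2) (Ioi 1) := by
    refine Integrable.mono' (((integrableOn_Ioi_rpow_of_lt (by norm_num : (-2 : ℝ) < -1)
      one_pos).const_mul (4 * C))) hmeas.restrict ?_
    refine (ae_restrict_iff' measurableSet_Ioi).mpr (ae_of_all _ fun y (hy : 1 < y) => ?_)
    have hnum : |u (x + y) - 2 * u x + u (x - y)| ≤ 4 * C := by
      have := abs_add_three (u (x + y)) (-(2 * u x)) (u (x - y))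
      rw [abs_neg, abs_mul, abs_two, ← sub_eq_add_neg] at this
      linarith [hC (x + y), hC x, hC (x - y)]
    rw [Real.norm_eq_abs, abs_div, abs_of_pos (by positivity : 0 < y ^ 2),
      Real.rpow_neg (by positivity), Real.rpow_two, ← div_eq_mul_inv]
    exact div_le_div_of_nonneg_right hnum (by positivity)
  rw [← Ioc_union_Ioi_eq_Ioi zero_le_one]
  exact hnear.union hfar

lemma halfLap_fwdDiff
    (hu : ∀ x, IntegrableOn (fun y => (u (x + y) - 2 * u x + u (x - y)) / y ^ 2) (Ioi 0))
    (h x : ℝ) : halfLap (Δ_[h] u) x = Δ_[h] (halfLap u) x := by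
  simp only [halfLap, fwdDiff]
  rw [← mul_sub, ← integral_sub (hu _) (hu _)]
  congr 1
  refine integral_congr_ae (ae_of_all _ fun y => ?_)
  simp only [add_right_comm x y h, sub_add_eq_add_sub]
  ring

lemma halfLap_nonneg_of_isMaxOn {x : ℝ} (hx : IsMaxOn u univ x) : 0 ≤ halfLap u x := by
  have hint : ∫ y in Ioi (0 : ℝ), (u (x + y) - 2 * u x + u (x - y)) / y ^ 2 ≤ 0 :=
    setIntegral_nonpos measurableSet_Ioi fun y _ => div_nonpos_of_nonpos_of_nonneg
      (by linarith [isMaxOn_univ_iff.mp hx (x + y), isMaxOn_univ_iff.mp hx (x - y)]) (sq_nonneg y)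
  exact mul_nonneg_of_nonpos_of_nonpos (by simp [Real.pi_pos.le]) hint

lemma halfLap_nonpos_of_isMinOn {x : ℝ} (hx : IsMinOn u univ x) : halfLap u x ≤ 0 := by
  have hint : 0 ≤ ∫ y in Ioi (0 : ℝ), (u (x + y) - 2 * u x + u (x - y)) / y ^ 2 :=
    setIntegral_nonneg measurableSet_Ioi fun y _ => div_nonneg
      (by linarith [isMinOn_univ_iff.mp hx (x + y), isMinOn_univ_iff.mp hx (x - y)]) (sq_nonneg y)
  exact mul_nonpos_of_nonpos_of_nonneg (by simp [Real.pi_pos.le]) hint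

lemma IsMaxOn.neg_halfLap_add_mul_deriv_nonpos {x : ℝ} (hx : IsMaxOn u univ x) (c : ℝ) :
    -halfLap u x + c * deriv u x ≤ 0 := by
  rw [(hx.isLocalMax univ_mem).deriv_eq_zero]
  linarith [halfLap_nonneg_of_isMaxOn hx]

lemma IsMinOn.neg_halfLap_add_mul_deriv_nonneg {x : ℝ} (hx : IsMinOn u univ x) (c : ℝ) :
    0 ≤ -halfLap u x + c * deriv u x := by
  rw [(hx.isLocalMin univ_mem).deriv_eq_zero]
  linarith [halfLap_nonpos_of_isMinOn hx]

lemma neg_halfLap_fwdDiff_add_mul_deriv {C c : ℝ} {g : ℝ → ℝ} (hu : ContDiff ℝ 2 u)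
    (hC : ∀ x, |u x| ≤ C) (heq : ∀ x, -halfLap u x + c * deriv u x = g x) (h x : ℝ) :
    -halfLap (Δ_[h] u) x + c * deriv (Δ_[h] u) x = Δ_[h] g x := by
  rw [halfLap_fwdDiff (integrableOn_halfLap_integrand hu hC), deriv_fwdDiff
    (hu.differentiable (by norm_num))]
  simp only [fwdDiff, ← heq]
  ring

end HalfLaplacian

lemma abs_le_of_isMaxOn_of_isMinOn {w : ℝ → ℝ} {M : ℝ} (hw : Continuous w)
    (hbot : Tendsto w atBot (𝓝 0)) (htop : Tendsto w atTop (𝓝 0)) (hM : 0 ≤ M)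
    (hmax : ∀ x₀, IsMaxOn w univ x₀ → 0 < w x₀ → w x₀ ≤ M)
    (hmin : ∀ x₀, IsMinOn w univ x₀ → w x₀ < 0 → -M ≤ w x₀) (x : ℝ) : |w x| ≤ M := by
  have hlim : Tendsto w (cocompact ℝ) (𝓝 0) := by
    rw [cocompact_eq_atBot_atTop]
    exact hbot.sup htop
  rw [abs_le]
  constructor
  · by_contra! hx
    obtain ⟨x₀, hx₀⟩ := hw.exists_forall_le' x
      ((hlim.eventually (lt_mem_nhds (show w x < 0 by linarith))).mono fun _ hy => hy.le)
    have := hmin x₀ (isMinOn_univ_iff.mpr hx₀) (by linarith [hx₀ x])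
    linarith [hx₀ x]
  · by_contra! hx
    obtain ⟨x₀, hx₀⟩ := hw.exists_forall_ge' x
      ((hlim.eventually (gt_mem_nhds (show 0 < w x by linarith))).mono fun _ hy => hy.le)
    have := hmax x₀ (isMaxOn_univ_iff.mpr hx₀) (by linarith [hx₀ x])
    linarith [hx₀ x]

lemma exists_abs_secondDiff_sub_deriv_mul_le {φ : ℝ → ℝ} {L : NNReal} {a b c : ℝ}
    (hφ : Differentiable ℝ φ) (hL : LipschitzOnWith L (deriv φ) (Icc a c))
    (hab : a < b) (hbc : b < c) :
    ∃ θ ∈ Icc b c, |(φ c - φ b) - (φ b - φ a) - deriv φ θ * ((c - b) - (b - a))|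
      ≤ L * (c - a) * (b - a) := by
  obtain ⟨θ₀, hθ₀, hslope₀⟩ := exists_deriv_eq_slope φ hab hφ.continuous.continuousOn
    hφ.differentiableOn
  obtain ⟨θ₁, hθ₁, hslope₁⟩ := exists_deriv_eq_slope φ hbc hφ.continuous.continuousOn
    hφ.differentiableOn
  refine ⟨θ₁, Ioo_subset_Icc_self hθ₁, ?_⟩
  rw [eq_div_iff (sub_pos.mpr hab).ne'] at hslope₀
  rw [eq_div_iff (sub_pos.mpr hbc).ne'] at hslope₁
  have hLip : |deriv φ θ₁ - deriv φ θ₀| ≤ L * (c - a) := by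
    have := hL.dist_le_mul θ₁ ⟨by linarith [hθ₁.1], hθ₁.2.le⟩ θ₀ ⟨hθ₀.1.le, by linarith [hθ₀.2]⟩
    have hθ : |θ₁ - θ₀| ≤ c - a :=
      abs_le.mpr ⟨by linarith [hθ₀.2, hθ₁.1], by linarith [hθ₀.1, hθ₁.2]⟩
    rw [Real.dist_eq, Real.dist_eq] at this
    exact this.trans (mul_le_mul_of_nonneg_left hθ L.coe_nonneg)
  calc |(φ c - φ b) - (φ b - φ a) - deriv φ θ₁ * ((c - b) - (b - a))|
      = |(deriv φ θ₁ - deriv φ θ₀) * (b - a)| := by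
        rw [← hslope₀, ← hslope₁]
        congr 1
        ring
    _ = |deriv φ θ₁ - deriv φ θ₀| * (b - a) := by rw [abs_mul, abs_of_pos (sub_pos.mpr hab)]
    _ ≤ L * (c - a) * (b - a) := mul_le_mul_of_nonneg_right hLip (by linarith)

lemma Filter.Tendsto.eventually_forall_Icc_lt {α : Type*} {g : ℝ → ℝ} {l : Filter α}
    {p q : α → ℝ} {a m : ℝ} (hp : Tendsto p l (𝓝 a)) (hq : Tendsto q l (𝓝 a))
    (hg : ContinuousAt g a) (hm : m < g a) : ∀ᶠ x in l, ∀ v ∈ Icc (p x) (q x), m < g v :=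
  (hp.Icc hq).eventually (eventually_smallSets_forall.mpr (hg.eventually (lt_mem_nhds hm)))

lemma exists_forall_le_of_le_div_sq {f : ℝ → ℝ} {B : ℝ} (hf : Continuous f)
    (hB : ∀ x, 1 ≤ |x| → f x ≤ B / |x| ^ 2) : ∃ K, ∀ x, f x ≤ K := by
  obtain ⟨C, hC⟩ := isCompact_Icc.exists_bound_of_continuousOn (s := Icc (-1) 1) hf.continuousOn
  refine ⟨max C |B|, fun x => ?_⟩
  rcases le_or_gt |x| 1 with hx | hx
  · exact (le_abs_self _).trans ((hC x (abs_le.mp hx)).trans (le_max_left _ _))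
  · calc f x ≤ B / |x| ^ 2 := hB x hx.le
      _ ≤ |B| / |x| ^ 2 := by gcongr; exact le_abs_self B
      _ ≤ |B| := div_le_self (abs_nonneg B) (one_le_pow₀ hx.le)
      _ ≤ max C |B| := le_max_right _ _

structure IsMonotoneFront (F : ℝ → ℝ) (c ηl ηr : ℝ) (η : ℝ → ℝ) : Prop where
  contDiff : ContDiff ℝ 2 η
  strictMono : StrictMono η
  tendsto_atBot : Tendsto η atBot (𝓝 ηl)
  tendsto_atTop : Tendsto η atTop (𝓝 ηr)
  eq : ∀ x, -halfLap η x + c * deriv η x = deriv F (η x)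

namespace IsMonotoneFront

variable {F η : ℝ → ℝ} {c ηl ηr : ℝ}

lemma mem_Icc (hη : IsMonotoneFront F c ηl ηr η) (x : ℝ) : η x ∈ Icc ηl ηr :=
  ⟨hη.strictMono.monotone.le_of_tendsto hη.tendsto_atBot x,
    hη.strictMono.monotone.ge_of_tendsto hη.tendsto_atTop x⟩

lemma abs_le_max_abs_abs (hη : IsMonotoneFront F c ηl ηr η) (x : ℝ) : |η x| ≤ max |ηl| |ηr| :=
  _root_.abs_le_max_abs_abs (hη.mem_Icc x).1 (hη.mem_Icc x).2

lemma neg_halfLap_fwdDiff_fwdDiff_add_mul_deriv (hη : IsMonotoneFront F c ηl ηr η) (h x : ℝ) :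
    -halfLap (Δ_[h] (Δ_[h] η)) x + c * deriv (Δ_[h] (Δ_[h] η)) x
      = Δ_[h] (Δ_[h] fun y => deriv F (η y)) x :=
  neg_halfLap_fwdDiff_add_mul_deriv (hη.contDiff.fwdDiff h) (abs_fwdDiff_le hη.abs_le_max_abs_abs h)
    (neg_halfLap_fwdDiff_add_mul_deriv hη.contDiff hη.abs_le_max_abs_abs hη.eq h) h x

lemma exists_abs_fwdDiff_fwdDiff_comp_sub_mul_le (hη : IsMonotoneFront F c ηl ηr η)
    {L : NNReal} {K m h x : ℝ} (hF : Differentiable ℝ (deriv F))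
    (hL : LipschitzOnWith L (deriv (deriv F)) (Icc ηl ηr)) (hK : ∀ x, deriv η x ≤ K)
    (hh : h ∈ Ioc 0 1) (hwell : ∀ v ∈ Icc (η x) (η (x + 2)), m ≤ deriv (deriv F) v) :
    ∃ κ ≥ m, |Δ_[h] (Δ_[h] fun y => deriv F (η y)) x - κ * Δ_[h] (Δ_[h] η) x|
      ≤ 2 * L * K ^ 2 * h ^ 2 := by
  obtain ⟨hh₀, hh₁⟩ := hh
  have hab : η x < η (x + h) := hη.strictMono (by linarith)
  have hbc : η (x + h) < η (x + h + h) := hη.strictMono (by linarith)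
  obtain ⟨θ, hθ, hbound⟩ := exists_abs_secondDiff_sub_deriv_mul_le hF
    (hL.mono (Icc_subset_Icc (hη.mem_Icc x).1 (hη.mem_Icc _).2)) hab hbc
  refine ⟨deriv (deriv F) θ, hwell θ ⟨hab.le.trans hθ.1,
    hθ.2.trans (hη.strictMono.monotone (by linarith))⟩, ?_⟩
  have hdiff : Differentiable ℝ η := hη.contDiff.differentiable (by norm_num)
  have hstep₁ : η (x + h) - η x ≤ K * h := by
    simpa using image_sub_le_mul_sub_of_deriv_le hdiff hK (le_add_of_nonneg_right hh₀.le)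
  have hstep₂ : η (x + h + h) - η x ≤ K * (2 * h) := by
    simpa [add_assoc, ← two_mul] using
      image_sub_le_mul_sub_of_deriv_le hdiff hK (by linarith : x ≤ x + h + h)
  have hK₀ : 0 < K := by nlinarith
  calc _ ≤ L * (η (x + h + h) - η x) * (η (x + h) - η x) := hbound
    _ ≤ L * (K * (2 * h)) * (K * h) := by gcongr
    _ = 2 * L * K ^ 2 * h ^ 2 := by ring

lemma abs_fwdDiff_fwdDiff_le_mul_sq_of_wells (hη : IsMonotoneFront F c ηl ηr η)
    {L : NNReal} {K m R₁ R₂ C₀ h : ℝ} (hF : Differentiable ℝ (deriv F))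
    (hL : LipschitzOnWith L (deriv (deriv F)) (Icc ηl ηr)) (hK : ∀ x, deriv η x ≤ K)
    (hm : 0 < m)
    (hwells : ∀ x, x ≤ R₂ ∨ R₁ ≤ x → ∀ v ∈ Icc (η x) (η (x + 2)), m ≤ deriv (deriv F) v)
    (hC₀ : ∀ t ∈ Icc R₂ (R₁ + 2), |deriv (deriv η) t| ≤ C₀) (hh : h ∈ Ioc 0 1) (x : ℝ) :
    |Δ_[h] (Δ_[h] η) x| ≤ max C₀ (2 * L * K ^ 2 / m) * h ^ 2 := by
  have hmiddle : ∀ x₀, R₂ < x₀ → x₀ < R₁ → |Δ_[h] (Δ_[h] η) x₀| ≤ C₀ * h ^ 2 :=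
    fun x₀ hR₂ hR₁ => abs_fwdDiff_fwdDiff_le_mul_sq hη.contDiff hh.1
      fun t ht => hC₀ t ⟨by linarith [ht.1], by linarith [ht.2, hh.2]⟩
  have hmiddle_le : C₀ * h ^ 2 ≤ max C₀ (2 * L * K ^ 2 / m) * h ^ 2 := by
    gcongr; exact le_max_left _ _
  have hwell_le : 2 * L * K ^ 2 / m * h ^ 2 ≤ max C₀ (2 * L * K ^ 2 / m) * h ^ 2 := by
    gcongr; exact le_max_right _ _
  refine abs_le_of_isMaxOn_of_isMinOn ((hη.contDiff.fwdDiff h).fwdDiff h).continuous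
    ((hη.tendsto_atBot.fwdDiff_atBot h).fwdDiff_atBot h)
    ((hη.tendsto_atTop.fwdDiff_atTop h).fwdDiff_atTop h)
    (le_trans (by positivity) hwell_le) (fun x₀ hmax hpos => ?_) (fun x₀ hmin hneg => ?_) x
  · have hG := hmax.neg_halfLap_add_mul_deriv_nonpos c
    rw [hη.neg_halfLap_fwdDiff_fwdDiff_add_mul_deriv] at hG
    by_cases hx₀ : x₀ ≤ R₂ ∨ R₁ ≤ x₀
    · obtain ⟨κ, hκ, hE⟩ := hη.exists_abs_fwdDiff_fwdDiff_comp_sub_mul_le hF hL hK hh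
        (hwells x₀ hx₀)
      have : m * Δ_[h] (Δ_[h] η) x₀ ≤ 2 * L * K ^ 2 * h ^ 2 := by
        nlinarith [(abs_le.mp hE).1]
      refine le_trans ?_ hwell_le
      rw [div_mul_eq_mul_div, le_div_iff₀ hm]
      linarith
    · simp only [not_or, not_le] at hx₀
      exact (le_abs_self _).trans ((hmiddle x₀ hx₀.1 hx₀.2).trans hmiddle_le)
  · have hG := hmin.neg_halfLap_add_mul_deriv_nonneg c
    rw [hη.neg_halfLap_fwdDiff_fwdDiff_add_mul_deriv] at hG
    by_cases hx₀ : x₀ ≤ R₂ ∨ R₁ ≤ x₀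
    · obtain ⟨κ, hκ, hE⟩ := hη.exists_abs_fwdDiff_fwdDiff_comp_sub_mul_le hF hL hK hh
        (hwells x₀ hx₀)
      have : -(2 * L * K ^ 2 * h ^ 2) ≤ m * Δ_[h] (Δ_[h] η) x₀ := by
        nlinarith [(abs_le.mp hE).2]
      refine le_trans (neg_le_neg hwell_le) ?_
      rw [div_mul_eq_mul_div, ← neg_div, div_le_iff₀ hm]
      linarith
    · simp only [not_or, not_le] at hx₀
      exact (neg_le_neg hmiddle_le).trans
        ((neg_le_neg (hmiddle x₀ hx₀.1 hx₀.2)).trans (neg_abs_le _))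

lemma exists_abs_fwdDiff_fwdDiff_le_mul_sq (hη : IsMonotoneFront F c ηl ηr η)
    (hF : ContDiff ℝ 3 F) (hFl : 0 < deriv (deriv F) ηl) (hFr : 0 < deriv (deriv F) ηr)
    {K : ℝ} (hK : ∀ x, deriv η x ≤ K) :
    ∃ M, ∀ h ∈ Ioc (0 : ℝ) 1, ∀ x, |Δ_[h] (Δ_[h] η) x| ≤ M * h ^ 2 := by
  have hF₂ : ContDiff ℝ 1 (deriv (deriv F)) := by fun_prop
  have hF₁ : Differentiable ℝ (deriv F) :=
    (show ContDiff ℝ 2 (deriv F) from hF.deriv').differentiable (by norm_num)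
  obtain ⟨L, hL⟩ :=
    hF₂.locallyLipschitz.locallyLipschitzOn.exists_lipschitzOnWith_of_compact isCompact_Icc
  obtain ⟨m, hm, hml, hmr⟩ :
      ∃ m, 0 < m ∧ m < deriv (deriv F) ηl ∧ m < deriv (deriv F) ηr :=
    ⟨min (deriv (deriv F) ηl) (deriv (deriv F) ηr) / 2, by positivity,
      by linarith [min_le_left (deriv (deriv F) ηl) (deriv (deriv F) ηr)],
      by linarith [min_le_right (deriv (deriv F) ηl) (deriv (deriv F) ηr)]⟩
  obtain ⟨R₂, hR₂⟩ := eventually_atBot.mp <| hη.tendsto_atBot.eventually_forall_Icc_lt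
    (hη.tendsto_atBot.comp (tendsto_atBot_add_const_right _ 2 tendsto_id))
    hF₂.continuous.continuousAt hml
  obtain ⟨R₁, hR₁⟩ := eventually_atTop.mp <| hη.tendsto_atTop.eventually_forall_Icc_lt
    (hη.tendsto_atTop.comp (tendsto_atTop_add_const_right _ 2 tendsto_id))
    hF₂.continuous.continuousAt hmr
  have hwells : ∀ x, x ≤ R₂ ∨ R₁ ≤ x → ∀ v ∈ Icc (η x) (η (x + 2)), m ≤ deriv (deriv F) v := by
    rintro x (hx | hx) v hv
    exacts [(hR₂ x hx v hv).le, (hR₁ x hx v hv).le]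
  obtain ⟨C₀, hC₀⟩ := isCompact_Icc.exists_bound_of_continuousOn (s := Icc R₂ (R₁ + 2))
    (show Continuous (deriv (deriv η)) by have := hη.contDiff; fun_prop).continuousOn
  exact ⟨_, fun h hh => hη.abs_fwdDiff_fwdDiff_le_mul_sq_of_wells hF₁ hL hK hm hwells
    (by simpa only [Real.norm_eq_abs] using hC₀) hh⟩

end IsMonotoneFront

theorem weertman_second_deriv_bounded_general
    (ηl ηr : ℝ)
    (F : ℝ → ℝ) (hF : ContDiff ℝ 3 F)
    (hFl2 : 0 < deriv (deriv F) ηl) (hFr2 : 0 < deriv (deriv F) ηr)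
    (η : ℝ → ℝ) (c : ℝ)
    (hη : ContDiff ℝ 2 η)
    (hη' : ∀ x, 0 < deriv η x)
    (hbot : Tendsto η atBot (nhds ηl)) (htop : Tendsto η atTop (nhds ηr))
    (heq : ∀ x, -halfLap η x + c * deriv η x = deriv F (η x))
    (hdecay : ∃ A B : ℝ, 0 < A ∧ A < B ∧ ∀ x : ℝ, 1 ≤ |x| →
      A / |x| ^ 2 ≤ deriv η x ∧ deriv η x ≤ B / |x| ^ 2) :
    ∃ M : ℝ, ∀ x, |deriv (deriv η) x| ≤ M := by
  obtain ⟨A, B, -, -, hdecay⟩ := hdecay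
  have hfront : IsMonotoneFront F c ηl ηr η := ⟨hη, strictMono_of_deriv_pos hη', hbot, htop, heq⟩
  obtain ⟨K, hK⟩ := exists_forall_le_of_le_div_sq (hη.continuous_deriv (by norm_num))
    fun x hx => (hdecay x hx).2
  obtain ⟨M, hM⟩ := hfront.exists_abs_fwdDiff_fwdDiff_le_mul_sq hF hFl2 hFr2 hK
  exact ⟨M, abs_deriv_deriv_le_of_abs_fwdDiff_fwdDiff_le hη hM⟩

/-- The second derivative of a Weertman profile is bounded on ℝ (Lemma 1). -/
theorem weertman_second_deriv_bounded
    (ηl ηr : ℝ) (hlr : ηl < ηr)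
    (F : ℝ → ℝ) (hF : ContDiff ℝ 3 F)
    (hFl : deriv F ηl = 0) (hFr : deriv F ηr = 0)
    (hFl2 : 0 < deriv (deriv F) ηl) (hFr2 : 0 < deriv (deriv F) ηr)
    (η : ℝ → ℝ) (c : ℝ)
    (hη : ContDiff ℝ 2 η)
    (hη' : ∀ x, 0 < deriv η x)
    (hbot : Tendsto η atBot (nhds ηl)) (htop : Tendsto η atTop (nhds ηr))
    (heq : ∀ x, -halfLap η x + c * deriv η x = deriv F (η x))
    (hdecay : ∃ A B : ℝ, 0 < A ∧ A < B ∧ ∀ x : ℝ, 1 ≤ |x| →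
      A / |x| ^ 2 ≤ deriv η x ∧ deriv η x ≤ B / |x| ^ 2) :
    ∃ M : ℝ, ∀ x, |deriv (deriv η) x| ≤ M :=
  weertman_second_deriv_bounded_general ηl ηr F hF hFl2 hFr2 η c hη hη' hbot htop heq hdecay
end

section
/- Sub- and super-solutions: let η_l < η_r, let F : ℝ → ℝ be of class C³ with F', F'', F''' bounded, bistable between η_l and η_r, and let Δ₀ > 0 be such that F'' > 0 on [η_l − Δ₀, η_l + Δ₀] ∪ [η_r − Δ₀, η_r + Δ₀]. Let η : ℝ → ℝ be of class C², bounded, with η' > 0, lim_{x→−∞} η(x) = η_l, lim_{x→+∞} η(x) = η_r, and −|∂x|η(x) + c η'(x) = F'(η(x)) for all x, for some c ∈ ℝ. Let 0 < Δ₁ < Δ₀. Then there exist positive constants σ and β such that for every δ ∈ (0, Δ₁), every l ∈ ℝ and every i ∈ {−1, +1}, the function w_i(t,x) = η(ζ_i(t,x)) + i δ e^{−βt}, where ζ_i(t,x) = x − ct + i l + i σ δ (1 − e^{−βt}), satisfies i·(∂_t w_i(t,x) + |∂x|w_i(t,·)(x) + F'(w_i(t,x))) ≥ 0 for all t ≥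 0 and x ∈ ℝ. -/
open MeasureTheory Filter Set

/- With `E = e^{-βt}` and `ζ` the shifted argument, the travelling-wave equation reduces
`i·(∂_t w + |∂x|w + F'(w))` to `δE·(σβ η'(ζ) − β) + i·(F'(η(ζ) + iδE) − F'(η(ζ)))`, and by the mean
value theorem the second term is `δE·F''(ξ)` with `|ξ − η(ζ)| < δ < Δ₁`. So everything reduces
to `β ≤ σβ η'(z) + F''(ξ)` whenever `|ξ − η(z)| < Δ₁`. Take `β` to be the minimum of `F''` on the
wells. Where `η(z)` is within `Δ₀ − Δ₁` of `η_l` or `η_r`, the point `ξ` lies in a well, so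
`F''(ξ) ≥ β`; on the remaining compact range of `z`, `η'` is bounded below by some `m > 0`, and `σ`
is chosen with `σβm ≥ β + sup |F''|`. -/

lemma halfLap_comp_add_add_const (u : ℝ → ℝ) (a b x : ℝ) :
    halfLap (fun y => u (y + a) + b) x = halfLap u (x + a) := by
  unfold halfLap
  congr 1
  refine setIntegral_congr_fun measurableSet_Ioi fun y _ => ?_
  dsimp only
  rw [add_right_comm x y a, show x - y + a = x + a - y by ring]
  ring

lemma deriv_comp_travelling_shift {η : ℝ → ℝ} (hη : Differentiable ℝ η) (x c a b d β t : ℝ) :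
    deriv (fun s => η (x - c * s + a + b * (1 - Real.exp (-β * s))) + d * Real.exp (-β * s)) t
      = deriv η (x - c * t + a + b * (1 - Real.exp (-β * t))) * (-c + b * β * Real.exp (-β * t))
        - d * β * Real.exp (-β * t) := by
  have hexp : HasDerivAt (fun s => Real.exp (-β * s)) (Real.exp (-β * t) * (-β * 1)) t :=
    ((hasDerivAt_id t).const_mul (-β)).exp
  have hshift : HasDerivAt (fun s => x - c * s + a + b * (1 - Real.exp (-β * s)))
      (-c + b * β * Real.exp (-β * t)) t := by
    refine ((((hasDerivAt_const t x).sub ((hasDerivAt_id t).const_mul c)).add_const a).add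
      ((hexp.const_sub 1).const_mul b)).congr_deriv ?_
    ring
  refine (((hη _).hasDerivAt.comp t hshift).add (hexp.const_mul d)).deriv.trans ?_
  ring

lemma exists_abs_sub_lt_and_sub_eq_deriv_mul {f : ℝ → ℝ} (hf : Differentiable ℝ f) (a : ℝ)
    {h : ℝ} (hh : h ≠ 0) : ∃ ξ, |ξ - a| < |h| ∧ f (a + h) - f a = deriv f ξ * h := by
  rcases hh.lt_or_gt with hneg | hpos
  · obtain ⟨ξ, ⟨hξl, hξr⟩, hξ⟩ := exists_deriv_eq_slope f (show a + h < a by linarith)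
      hf.continuous.continuousOn hf.differentiableOn
    refine ⟨ξ, ?_, ?_⟩
    · rw [abs_of_neg hneg, abs_lt]
      constructor <;> linarith
    · rw [hξ, show a - (a + h) = -h by ring]
      field_simp
      ring
  · obtain ⟨ξ, ⟨hξl, hξr⟩, hξ⟩ := exists_deriv_eq_slope f (show a < a + h by linarith)
      hf.continuous.continuousOn hf.differentiableOn
    refine ⟨ξ, ?_, ?_⟩
    · rw [abs_of_pos hpos, abs_lt]
      constructor <;> linarith
    · rw [hξ, add_sub_cancel_left]
      field_simp

lemma exists_pos_le_deriv_or_near_limits {η : ℝ → ℝ} {ηl ηr : ℝ}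
    (hη : Continuous (deriv η)) (hη' : ∀ x, 0 < deriv η x)
    (hbot : Tendsto η atBot (nhds ηl)) (htop : Tendsto η atTop (nhds ηr)) {ε : ℝ} (hε : 0 < ε) :
    ∃ m > 0, ∀ z, |η z - ηl| < ε ∨ |η z - ηr| < ε ∨ m ≤ deriv η z := by
  obtain ⟨A, hA⟩ := eventually_atBot.mp (Metric.tendsto_nhds.mp hbot ε hε)
  obtain ⟨B, hB⟩ := eventually_atTop.mp (Metric.tendsto_nhds.mp htop ε hε)
  obtain ⟨m, hm, hmAB⟩ :=
    isCompact_Icc.exists_forall_le' (s := Icc A B) hη.continuousOn fun z _ => hη' z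
  refine ⟨m, hm, fun z => ?_⟩
  rcases le_or_gt z A with hzA | hzA
  · exact Or.inl (hA z hzA)
  rcases le_or_gt B z with hzB | hzB
  · exact Or.inr (Or.inl (hB z hzB))
  · exact Or.inr (Or.inr (hmAB z ⟨hzA.le, hzB.le⟩))

lemma exists_le_mul_deriv_add {η g : ℝ → ℝ} {ηl ηr Δ₀ Δ₁ β M : ℝ}
    (hη : Continuous (deriv η)) (hη' : ∀ x, 0 < deriv η x)
    (hbot : Tendsto η atBot (nhds ηl)) (htop : Tendsto η atTop (nhds ηr)) (hΔ : Δ₁ < Δ₀)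
    (hwells : ∀ v ∈ Icc (ηl - Δ₀) (ηl + Δ₀) ∪ Icc (ηr - Δ₀) (ηr + Δ₀), β ≤ g v)
    (hM : ∀ v, M ≤ g v) :
    ∃ K > 0, ∀ z ξ, |ξ - η z| < Δ₁ → β ≤ K * deriv η z + g ξ := by
  obtain ⟨m, hm, hz⟩ := exists_pos_le_deriv_or_near_limits hη hη' hbot htop (sub_pos.mpr hΔ)
  obtain ⟨K, hK, hKm⟩ : ∃ K > 0, β - M ≤ K * m :=
    ⟨(|β - M| + 1) / m, by positivity,
      by rw [div_mul_cancel₀ _ hm.ne']; linarith [le_abs_self (β - M)]⟩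
  refine ⟨K, hK, fun z ξ hξ => ?_⟩
  have hKη : 0 ≤ K * deriv η z := mul_nonneg hK.le (hη' z).le
  obtain ⟨hξl, hξr⟩ := abs_lt.mp hξ
  rcases hz z with hl | hr | hmz
  · obtain ⟨hl₁, hl₂⟩ := abs_lt.mp hl
    linarith [hwells ξ (Or.inl ⟨by linarith, by linarith⟩)]
  · obtain ⟨hr₁, hr₂⟩ := abs_lt.mp hr
    linarith [hwells ξ (Or.inr ⟨by linarith, by linarith⟩)]
  · nlinarith [hM ξ]

lemma sub_super_solution_of_le {F η : ℝ → ℝ} {c σ β Δ δ t : ℝ}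
    (hF : Differentiable ℝ (deriv F)) (hη : Differentiable ℝ η)
    (heq : ∀ x, -halfLap η x + c * deriv η x = deriv F (η x))
    (hbound : ∀ z ξ, |ξ - η z| < Δ → β ≤ σ * β * deriv η z + deriv (deriv F) ξ)
    (hβ : 0 ≤ β) (hδ : 0 < δ) (hδΔ : δ < Δ) (ht : 0 ≤ t) (l i : ℝ) (hi : i = 1 ∨ i = -1)
    (x : ℝ) :
    0 ≤ i * ((deriv (fun s => η (x - c * s + i * l
                + i * σ * δ * (1 - Real.exp (-β * s))) + i * δ * Real.exp (-β * s)) t)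
      + halfLap (fun y => η (y - c * t + i * l
                + i * σ * δ * (1 - Real.exp (-β * t))) + i * δ * Real.exp (-β * t)) x
      + deriv F (η (x - c * t + i * l
                + i * σ * δ * (1 - Real.exp (-β * t))) + i * δ * Real.exp (-β * t))) := by
  rw [deriv_comp_travelling_shift hη]
  set E := Real.exp (-β * t)
  set Z := x - c * t + i * l + i * σ * δ * (1 - E)
  have hshift : (fun y => η (y - c * t + i * l + i * σ * δ * (1 - E)) + i * δ * E)
      = fun y => η (y + (Z - x)) + i * δ * E := by
    funext y; congr 2; ring
  have hhalf : halfLap η Z = c * deriv η Z - deriv F (η Z) := by linarith [heq Z]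
  rw [hshift, halfLap_comp_add_add_const, add_sub_cancel, hhalf]
  have hE : 0 < E := Real.exp_pos _
  have hE1 : E ≤ 1 := Real.exp_le_one_iff.mpr (by nlinarith)
  have habs_i : |i| = 1 := by rcases hi with rfl | rfl <;> norm_num
  have hi2 : i * i = 1 := by rcases hi with rfl | rfl <;> norm_num
  obtain ⟨ξ, hξ, hmvt⟩ := exists_abs_sub_lt_and_sub_eq_deriv_mul hF (η Z) (h := i * δ * E)
    (by rcases hi with rfl | rfl <;> positivity)
  rw [abs_mul, abs_mul, habs_i, abs_of_pos hδ, abs_of_pos hE, one_mul] at hξ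
  have hkey := hbound Z ξ (by nlinarith)
  calc (0 : ℝ) ≤ δ * E * (σ * β * deriv η Z + deriv (deriv F) ξ - β) :=
        mul_nonneg (by positivity) (by linarith)
    _ = _ := by
      linear_combination (-i) * hmvt
        - (σ * δ * β * E * deriv η Z - δ * β * E + δ * E * deriv (deriv F) ξ) * hi2

theorem sub_super_solutions_general
    (ηl ηr : ℝ)
    (F : ℝ → ℝ) (hF : ContDiff ℝ 3 F)
    (hF2 : ∃ M : ℝ, ∀ x, |deriv (deriv F) x| ≤ M)
    (Δ₀ : ℝ)
    (hwells : ∀ v ∈ Set.Icc (ηl - Δ₀) (ηl + Δ₀) ∪ Set.Icc (ηr - Δ₀) (ηr + Δ₀),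
      0 < deriv (deriv F) v)
    (η : ℝ → ℝ) (c : ℝ)
    (hη : ContDiff ℝ 2 η)
    (hη' : ∀ x, 0 < deriv η x)
    (hbot : Tendsto η atBot (nhds ηl)) (htop : Tendsto η atTop (nhds ηr))
    (heq : ∀ x, -halfLap η x + c * deriv η x = deriv F (η x))
    (Δ₁ : ℝ) (hΔ₁₀ : Δ₁ < Δ₀) :
    ∃ σ : ℝ, 0 < σ ∧ ∃ β : ℝ, 0 < β ∧
      ∀ δ : ℝ, 0 < δ → δ < Δ₁ → ∀ l : ℝ, ∀ i : ℝ, (i = 1 ∨ i = -1) →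
        ∀ t : ℝ, 0 ≤ t → ∀ x : ℝ,
          0 ≤ i * ((deriv (fun s => η (x - c * s + i * l
                      + i * σ * δ * (1 - Real.exp (-β * s))) + i * δ * Real.exp (-β * s)) t)
            + halfLap (fun y => η (y - c * t + i * l
                      + i * σ * δ * (1 - Real.exp (-β * t))) + i * δ * Real.exp (-β * t)) x
            + deriv F (η (x - c * t + i * l
                      + i * σ * δ * (1 - Real.exp (-β * t))) + i * δ * Real.exp (-β * t))) := by
  obtain ⟨M, hM⟩ := hF2
  have hF' : ContDiff ℝ 2 (deriv F) := hF.deriv'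
  obtain ⟨β, hβ, hβwells⟩ := (isCompact_Icc.union isCompact_Icc).exists_forall_le'
    (hF'.continuous_deriv one_le_two).continuousOn hwells
  obtain ⟨K, hK, hKbound⟩ := exists_le_mul_deriv_add (hη.continuous_deriv one_le_two) hη'
    hbot htop hΔ₁₀ hβwells fun v => neg_le_of_abs_le (hM v)
  have hσβ : K / β * β = K := div_mul_cancel₀ K hβ.ne'
  refine ⟨K / β, div_pos hK hβ, β, hβ, fun δ hδ hδΔ l i hi t ht x => ?_⟩
  refine sub_super_solution_of_le (hF'.differentiable two_ne_zero) (hη.differentiable two_ne_zero)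
    heq (fun z ξ hξ => ?_) hβ.le hδ hδΔ ht l i hi x
  rw [hσβ]
  exact hKbound z ξ hξ

/-- Sub- and super-solutions built from the traveling-wave profile (Lemma 2):
there exist `σ, β > 0` such that for every `δ ∈ (0,Δ₁)`, `l ∈ ℝ` and `i = ±1`,
the function `w_i(t,x) = η(x − ct + il + iσδ(1 − e^{−βt})) + iδe^{−βt}`
satisfies `i·(∂_t w_i + |∂x|w_i + F'(w_i)) ≥ 0`. -/
theorem sub_super_solutions
    (ηl ηr : ℝ) (hlr : ηl < ηr)
    (F : ℝ → ℝ) (hF : ContDiff ℝ 3 F)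
    (hF1 : ∃ M : ℝ, ∀ x, |deriv F x| ≤ M)
    (hF2 : ∃ M : ℝ, ∀ x, |deriv (deriv F) x| ≤ M)
    (hF3 : ∃ M : ℝ, ∀ x, |deriv (deriv (deriv F)) x| ≤ M)
    (hFl : deriv F ηl = 0) (hFr : deriv F ηr = 0)
    (hFl2 : 0 < deriv (deriv F) ηl) (hFr2 : 0 < deriv (deriv F) ηr)
    (Δ₀ : ℝ) (hΔ₀ : 0 < Δ₀)
    (hwells : ∀ v ∈ Set.Icc (ηl - Δ₀) (ηl + Δ₀) ∪ Set.Icc (ηr - Δ₀) (ηr + Δ₀),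
      0 < deriv (deriv F) v)
    (η : ℝ → ℝ) (c : ℝ)
    (hη : ContDiff ℝ 2 η) (hηb : ∃ M : ℝ, ∀ x, |η x| ≤ M)
    (hη' : ∀ x, 0 < deriv η x)
    (hbot : Tendsto η atBot (nhds ηl)) (htop : Tendsto η atTop (nhds ηr))
    (heq : ∀ x, -halfLap η x + c * deriv η x = deriv F (η x))
    (Δ₁ : ℝ) (hΔ₁ : 0 < Δ₁) (hΔ₁₀ : Δ₁ < Δ₀) :
    ∃ σ : ℝ, 0 < σ ∧ ∃ β : ℝ, 0 < β ∧
      ∀ δ : ℝ, 0 < δ → δ < Δ₁ → ∀ l : ℝ, ∀ i : ℝ, (i = 1 ∨ i = -1) →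
        ∀ t : ℝ, 0 ≤ t → ∀ x : ℝ,
          0 ≤ i * ((deriv (fun s => η (x - c * s + i * l
                      + i * σ * δ * (1 - Real.exp (-β * s))) + i * δ * Real.exp (-β * s)) t)
            + halfLap (fun y => η (y - c * t + i * l
                      + i * σ * δ * (1 - Real.exp (-β * t))) + i * δ * Real.exp (-β * t)) x
            + deriv F (η (x - c * t + i * l
                      + i * σ * δ * (1 - Real.exp (-β * t))) + i * δ * Real.exp (-β * t))) :=
  sub_super_solutions_general ηl ηr F hF hF2 Δ₀ hwells η c hη hη' hbot htop heq Δ₁ hΔ₁₀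
end
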